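/- Let d ≥ 2 be an even integer and Θ a d-small symbol with defining intervals, bipartition λ¹.λ², right region in row r and left region in row l = 3 − r. For a residue i modulo d, call a removable box R of λ¹ or λ² whose charged content is ≡ i (mod d) a good removable i-box if there is no addable box A of λ¹ or λ² with charged content ≡ i (mod d) such that either the charged content of A is strictly greater than that of R, or the charged contents of A and R are equal and A belongs to λ^r. Then Θ has no good removable i-box for any residue i modulo d if and only if w_ud(Θ) = ×^α ∧^w ∨^h ∘^β for some α, w, h, β ≥ 0, i.e., reading w_ud(Θ) from left to right one sees first all the ×'s, then all the ∧'s, then all the ∨'s, then all the ∘'s. -/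

import Mathlib

open scoped Classical

/-- A β-set: a set of integers containing all sufficiently small integers
and no sufficiently large ones. -/
def IsBetaSet (X : Set ℤ) : Prop :=
  (∃ c : ℤ, ∀ z : ℤ, z < c → z ∈ X) ∧ (∃ C : ℤ, ∀ z : ℤ, C ≤ z → z ∉ X)

/-- `topB X = max X`. -/
noncomputable def topB (X : Set ℤ) : ℤ := sSup X

/-- `botB X = max {z | every integer < z lies in X}`. -/
noncomputable def botB (X : Set ℤ) : ℤ := sSup {z : ℤ | ∀ w : ℤ, w < z → w ∈ X}

/-- The charge `s(X)` of a β-set `X`, computed with the cutoff `c = botB X`. -/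
noncomputable def chargeB (X : Set ℤ) : ℤ :=
  ((X ∩ Set.Ici (botB X)).ncard : ℤ) + botB X - 1

/-- `elemSeq X j` is the `(j+1)`-st largest element of the β-set `X`. -/
noncomputable def elemSeq (X : Set ℤ) : ℕ → ℤ
  | 0 => sSup X
  | n + 1 => sSup (X ∩ Set.Iio (elemSeq X n))

/-- The partition `λ(X)` of a β-set `X`, `0`-indexed: `partB X j = λ_{j+1}`,
recovered from `x_j = s(X) + λ_j - j + 1` where `x_j` is the `j`-th largest element. -/
noncomputable def partB (X : Set ℤ) (j : ℕ) : ℕ :=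
  (elemSeq X j - chargeB X + j).toNat

/-- The size `|λ(X)|` of the partition of a β-set `X`. -/
noncomputable def sizeB (X : Set ℤ) : ℕ := ∑ᶠ j : ℕ, partB X j

/-- A partition, encoded as a weakly decreasing eventually zero function (0-indexed). -/
def IsPartition (μ : ℕ → ℕ) : Prop :=
  (∀ j, μ (j + 1) ≤ μ j) ∧ ∃ N, ∀ j, N ≤ j → μ j = 0

/-- The β-set `{s + λ_j - j + 1 : j ≥ 1}` of the partition `μ` with charge `s`. -/
def betaOf (μ : ℕ → ℕ) (s : ℤ) : Set ℤ :=
  {x : ℤ | ∃ j : ℕ, x = s + (μ j : ℤ) - (j : ℤ)}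

/-- The symbol `Θ = (X₁, X₂)` is `d`-small with defining intervals
`I₁ = [a₁,b₁]` and `I₂ = [a₂,b₂]`. -/
structure IsDSmallWith (d : ℤ) (X₁ X₂ : Set ℤ) (a₁ b₁ a₂ b₂ : ℤ) : Prop where
  len₁ : b₁ - a₁ = d / 2 - 1
  len₂ : b₂ - a₂ = d / 2 - 1
  bot₁ : a₁ ≤ botB X₁
  bot₂ : a₂ ≤ botB X₂
  top₁ : topB X₁ ≤ b₁
  top₂ : topB X₂ ≤ b₂
  cong : d ∣ b₂ - (b₁ + d / 2)

/-- The symbol `Θ = (X₁, X₂)` is `d`-small: it admits some pair of defining intervals. -/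
def IsDSmall (d : ℤ) (X₁ X₂ : Set ℤ) : Prop :=
  ∃ a₁ b₁ a₂ b₂ : ℤ, IsDSmallWith d X₁ X₂ a₁ b₁ a₂ b₂

/-- The row (`1` or `2`) containing the right region. -/
def rightRow (b₁ b₂ : ℤ) : ℕ := if b₁ < b₂ then 2 else 1

/-- The row, as a β-set, containing the right region. -/
def rightSet (X₁ X₂ : Set ℤ) (b₁ b₂ : ℤ) : Set ℤ := if b₁ < b₂ then X₂ else X₁

/-- The row, as a β-set, containing the left region. -/
def leftSet (X₁ X₂ : Set ℤ) (b₁ b₂ : ℤ) : Set ℤ := if b₁ < b₂ then X₁ else X₂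

/-- The cardinality `kd` of the middle region. -/
def middleLen (d b₁ b₂ : ℤ) : ℤ := |b₂ - b₁| - d / 2

/-- The alphabet `{∧, ∨, ×, ∘}` of up-down diagrams: `up = ∧`, `dn = ∨`,
`cross = ×`, `circ = ∘`. -/
inductive UD : Type
  | up
  | dn
  | cross
  | circ
deriving DecidableEq

/-- The up-down diagram `w_ud(Θ)` of a `d`-small symbol with defining intervals:
`wud d X₁ X₂ b₁ b₂ i` is the letter `w_i` for `1 ≤ i ≤ d/2`.  Here the right
region is `[m+1, m+d/2]` with `m = max b₁ b₂ - d/2`, `β_i = m + i`, and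
`β_i - kd - d/2 = β_i - |b₂ - b₁|`. -/
noncomputable def wud (d : ℤ) (X₁ X₂ : Set ℤ) (b₁ b₂ : ℤ) (i : ℤ) : UD :=
  if (max b₁ b₂ - d / 2 + i) ∈ rightSet X₁ X₂ b₁ b₂ then
    if (max b₁ b₂ - d / 2 + i) - |b₂ - b₁| ∈ leftSet X₁ X₂ b₁ b₂ then UD.cross else UD.up
  else
    if (max b₁ b₂ - d / 2 + i) - |b₂ - b₁| ∈ leftSet X₁ X₂ b₁ b₂ then UD.dn else UD.circ

/-- Removing an `e`-cohook in row `1` (the rows get interchanged afterwards). -/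
def RemoveCohookRow1 (e : ℤ) (Θ Θ' : Set ℤ × Set ℤ) : Prop :=
  ∃ x : ℤ, x ∈ Θ.1 ∧ x - e ∉ Θ.2 ∧ Θ' = (Θ.2 ∪ {x - e}, Θ.1 \ {x})

/-- Removing an `e`-cohook in row `2` (the rows get interchanged afterwards). -/
def RemoveCohookRow2 (e : ℤ) (Θ Θ' : Set ℤ × Set ℤ) : Prop :=
  ∃ x : ℤ, x ∈ Θ.2 ∧ x - e ∉ Θ.1 ∧ Θ' = (Θ.2 \ {x}, Θ.1 ∪ {x - e})

/-- Removing an `e`-cohook. -/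
def RemoveCohook (e : ℤ) (Θ Θ' : Set ℤ × Set ℤ) : Prop :=
  RemoveCohookRow1 e Θ Θ' ∨ RemoveCohookRow2 e Θ Θ'

/-- The symbol `Θ` has an `e`-cohook. -/
def HasCohook (e : ℤ) (Θ : Set ℤ × Set ℤ) : Prop :=
  (∃ x : ℤ, x ∈ Θ.1 ∧ x - e ∉ Θ.2) ∨ (∃ x : ℤ, x ∈ Θ.2 ∧ x - e ∉ Θ.1)

/-- `C` is an `e`-cocore of `Θ`: a symbol with no `e`-cohooks obtained from `Θ`
by a finite sequence of `e`-cohook removals. -/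
def IsCocoreOf (e : ℤ) (Θ C : Set ℤ × Set ℤ) : Prop :=
  Relation.ReflTransGen (RemoveCohook e) Θ C ∧ ¬ HasCohook e C

/-- The `n`-fold composition of a relation. -/
def RelPow {α : Type*} (R : α → α → Prop) : ℕ → α → α → Prop
  | 0 => Eq
  | n + 1 => fun a c => ∃ b, R a b ∧ RelPow R n b c

/-- `(a, b)` (row `a`, column `b`, both `1`-indexed) is a box of the partition `μ`
(`μ` is `0`-indexed, so `μ (a-1)` is the `a`-th part `λ_a`). -/
def IsBox (μ : ℕ → ℕ) (a b : ℕ) : Prop := 1 ≤ a ∧ 1 ≤ b ∧ b ≤ μ (a - 1)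

/-- `(a, b)` is an addable box of `μ`: adjoining it yields a partition. -/
def IsAddableBox (μ : ℕ → ℕ) (a b : ℕ) : Prop :=
  1 ≤ a ∧ b = μ (a - 1) + 1 ∧ (a = 1 ∨ b ≤ μ (a - 2))

/-- `(a, b)` is a removable box of `μ`: deleting it yields a partition. -/
def IsRemovableBox (μ : ℕ → ℕ) (a b : ℕ) : Prop :=
  1 ≤ a ∧ b = μ (a - 1) ∧ 1 ≤ b ∧ μ a < b

/-- The charged content `t + b - a` of the box in row `a` and column `b`,
with respect to the charge `t`. -/
def chCont (t : ℤ) (a b : ℕ) : ℤ := t + (b : ℤ) - (a : ℤ)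

/-- Selecting the component `j ∈ {1, 2}` of a bipartition. -/
def compPart (μ₁ μ₂ : ℕ → ℕ) (j : ℕ) : ℕ → ℕ := if j = 1 then μ₁ else μ₂

/-- Selecting the component `j ∈ {1, 2}` of a pair of charges. -/
def compT (t₁ t₂ : ℤ) (j : ℕ) : ℤ := if j = 1 then t₁ else t₂

/-- The box `(a, b)` in component `j` is a good removable `i`-box of the
bipartition `(μ₁, μ₂)` with charges `(t₁, t₂)`, where `r` is the row containing
the right region: it is a removable box of charged content `≡ i (mod d)` and
there is no addable box `A` of either component with charged content `≡ i (mod d)`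
such that either `A` has strictly larger charged content, or `A` has equal
charged content and lies in component `r`. -/
def IsGoodRemovableBox (d : ℤ) (μ₁ μ₂ : ℕ → ℕ) (t₁ t₂ : ℤ) (r : ℕ) (i : ℤ)
    (j a b : ℕ) : Prop :=
  (j = 1 ∨ j = 2) ∧ IsRemovableBox (compPart μ₁ μ₂ j) a b ∧
    d ∣ chCont (compT t₁ t₂ j) a b - i ∧
    ∀ j' a' b' : ℕ, (j' = 1 ∨ j' = 2) → IsAddableBox (compPart μ₁ μ₂ j') a' b' →
      d ∣ chCont (compT t₁ t₂ j') a' b' - i →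
      ¬ (chCont (compT t₁ t₂ j) a b < chCont (compT t₁ t₂ j') a' b' ∨
        (chCont (compT t₁ t₂ j') a' b' = chCont (compT t₁ t₂ j) a b ∧ j' = r))

/-- The position of a letter in the order `× < ∧ < ∨ < ∘`. -/
def udIdx : UD → ℕ
  | UD.cross => 0
  | UD.up => 1
  | UD.dn => 2
  | UD.circ => 3

/-- The word `w₁ ⋯ w_{d/2}` reads `×^α ∧^w ∨^h ∘^β`: all `×`'s first, then all
`∧`'s, then all `∨`'s, then all `∘`'s. -/
def SortedUD (d : ℤ) (w : ℤ → UD) : Prop :=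
  ∀ i j : ℤ, 1 ≤ i → i ≤ j → j ≤ d / 2 → udIdx (w i) ≤ udIdx (w j)

/-- The number of occurrences of the letter `u` in the word `w₁ ⋯ w_{d/2}`. -/
noncomputable def countUD (d : ℤ) (w : ℤ → UD) (u : UD) : ℕ :=
  ((Finset.Icc (1 : ℤ) (d / 2)).filter fun i => w i = u).card

/-- `w'` is obtained from `w` by permuting the letters `∧` and `∨` among the
positions carrying `∧` or `∨`, leaving every `×` and `∘` in place. -/
def PermUpDn (d : ℤ) (w w' : ℤ → UD) : Prop :=
  (∀ i : ℤ, 1 ≤ i → i ≤ d / 2 →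
    ((w' i = UD.cross ↔ w i = UD.cross) ∧ (w' i = UD.circ ↔ w i = UD.circ))) ∧
  countUD d w' UD.up = countUD d w UD.up

/-- Replace every letter `∧` by `∨`, leaving the other letters unchanged. -/
def replaceUp : UD → UD
  | UD.up => UD.dn
  | u => u

section Beta

variable {X : Set ℤ} (hX : IsBetaSet X)

include hX

lemma bs_ne : X.Nonempty := by
  obtain ⟨⟨c, hc⟩, _⟩ := hX
  exact ⟨c - 1, hc _ (by omega)⟩

lemma bs_bdd : BddAbove X := by
  obtain ⟨_, ⟨C, hC⟩⟩ := hX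
  exact ⟨C, fun z hz => by by_contra h; exact hC z (by omega) hz⟩

lemma topB_mem : topB X ∈ X := Int.csSup_mem (bs_ne hX) (bs_bdd hX)

lemma le_topB {z : ℤ} (hz : z ∈ X) : z ≤ topB X := le_csSup (bs_bdd hX) hz

lemma lt_botB_mem {w : ℤ} (hw : w < botB X) : w ∈ X := by
  obtain ⟨⟨c, hc⟩, ⟨C, hC⟩⟩ := hX
  have hne : ({z : ℤ | ∀ w : ℤ, w < z → w ∈ X}).Nonempty := ⟨c, hc⟩
  have hbdd : BddAbove {z : ℤ | ∀ w : ℤ, w < z → w ∈ X} := by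
    refine ⟨C, fun z hz => ?_⟩
    by_contra h
    exact hC C le_rfl (hz C (by omega))
  exact Int.csSup_mem hne hbdd w hw

lemma botB_not_mem : botB X ∉ X := by
  intro hmem
  have h1 : botB X + 1 ∈ {z : ℤ | ∀ w : ℤ, w < z → w ∈ X} := by
    intro w hw
    rcases lt_or_eq_of_le (by omega : w ≤ botB X) with h | h
    · exact lt_botB_mem hX h
    · exact h ▸ hmem
  obtain ⟨_, ⟨C, hC⟩⟩ := hX
  have hbdd : BddAbove {z : ℤ | ∀ w : ℤ, w < z → w ∈ X} := by
    refine ⟨C, fun z hz => ?_⟩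
    by_contra h
    exact hC C le_rfl (hz C (by omega))
  have := le_csSup hbdd h1
  have : botB X + 1 ≤ botB X := this
  omega

lemma elem_ne (n : ℕ) : (X ∩ Set.Iio (elemSeq X n)).Nonempty := by
  refine ⟨min (botB X) (elemSeq X n) - 1, ?_, ?_⟩
  · exact lt_botB_mem hX (by omega)
  · simp only [Set.mem_Iio]; omega

lemma elem_mem (n : ℕ) : elemSeq X n ∈ X := by
  cases n with
  | zero => exact topB_mem hX
  | succ n =>
      have : elemSeq X (n+1) = sSup (X ∩ Set.Iio (elemSeq X n)) := rfl
      rw [this]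
      exact (Int.csSup_mem (elem_ne hX n) ((bs_bdd hX).mono Set.inter_subset_left)).1

lemma elem_succ_lt (n : ℕ) : elemSeq X (n+1) < elemSeq X n := by
  have : elemSeq X (n+1) = sSup (X ∩ Set.Iio (elemSeq X n)) := rfl
  rw [this]
  exact (Int.csSup_mem (elem_ne hX n) ((bs_bdd hX).mono Set.inter_subset_left)).2

lemma elem_succ_max {z : ℤ} (n : ℕ) (hz : z ∈ X) (hlt : z < elemSeq X n) :
    z ≤ elemSeq X (n+1) := by
  have : elemSeq X (n+1) = sSup (X ∩ Set.Iio (elemSeq X n)) := rfl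
  rw [this]
  exact le_csSup ((bs_bdd hX).mono Set.inter_subset_left) ⟨hz, hlt⟩

lemma elem_fin (t : ℤ) : (X ∩ Set.Ioi t).Finite := by
  refine Set.Finite.subset (Set.finite_Icc (t+1) (topB X)) ?_
  rintro y ⟨hy, hy'⟩
  exact ⟨by simpa using hy', le_topB hX hy⟩

lemma elem_surj {z : ℤ} (hz : z ∈ X) : ∃ n : ℕ, elemSeq X n = z := by
  suffices h : ∀ n : ℕ, ∀ z : ℤ, z ∈ X → (X ∩ Set.Ioi z).ncard = n → elemSeq X n = z by
    exact ⟨(X ∩ Set.Ioi z).ncard, h _ z hz rfl⟩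
  intro n
  induction n with
  | zero =>
      intro z hz hcard
      have hemp : X ∩ Set.Ioi z = ∅ := by
        rw [← Set.ncard_eq_zero (elem_fin hX z)]; exact hcard
      have htop : topB X = z := by
        rcases lt_or_eq_of_le (le_topB hX hz) with h | h
        · exact absurd (by exact ⟨topB_mem hX, h⟩ : topB X ∈ X ∩ Set.Ioi z)
            (by rw [hemp]; simp)
        · omega
      exact htop ▸ rfl
  | succ n ih =>
      intro z hz hcard
      have hne : (X ∩ Set.Ioi z).Nonempty := by
        rw [Set.nonempty_iff_ne_empty]
        intro h
        rw [h] at hcard; simp at hcard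
      have hbdd : BddBelow (X ∩ Set.Ioi z) := ⟨z, fun y hy => le_of_lt hy.2⟩
      set z' := sInf (X ∩ Set.Ioi z) with hz'
      have hz'mem : z' ∈ X ∩ Set.Ioi z := Int.csInf_mem hne hbdd
      have hz'X : z' ∈ X := hz'mem.1
      have hz'gt : z < z' := hz'mem.2
      have hstep : X ∩ Set.Ioi z' = (X ∩ Set.Ioi z) \ {z'} := by
        ext y
        simp only [Set.mem_inter_iff, Set.mem_Ioi, Set.mem_diff, Set.mem_singleton_iff]
        constructor
        · rintro ⟨hy, hy'⟩
          exact ⟨⟨hy, by omega⟩, by omega⟩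
        · rintro ⟨⟨hy, hy'⟩, hyne⟩
          have : z' ≤ y := csInf_le hbdd ⟨hy, hy'⟩
          exact ⟨hy, by omega⟩
      have hcard' : (X ∩ Set.Ioi z').ncard = n := by
        rw [hstep, Set.ncard_diff_singleton_of_mem hz'mem, hcard]
        omega
      have hgn : elemSeq X n = z' := ih z' hz'X hcard'
      have hdef : elemSeq X (n+1) = sSup (X ∩ Set.Iio (elemSeq X n)) := rfl
      rw [hdef, hgn]
      have hne2 : (X ∩ Set.Iio z').Nonempty := ⟨z, hz, hz'gt⟩
      apply le_antisymm
      · apply csSup_le hne2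
        rintro y ⟨hy, hy'⟩
        simp only [Set.mem_Iio] at hy'
        by_contra h
        have : z' ≤ y := csInf_le hbdd ⟨hy, by simp only [Set.mem_Ioi]; omega⟩
        omega
      · exact le_csSup ((bs_bdd hX).mono Set.inter_subset_left) ⟨hz, hz'gt⟩

lemma elem_card (n : ℕ) : (X ∩ Set.Ioi (elemSeq X n)).ncard = n := by
  induction n with
  | zero =>
      have : X ∩ Set.Ioi (elemSeq X 0) = ∅ := by
        ext y
        simp only [Set.mem_inter_iff, Set.mem_Ioi, Set.mem_empty_iff_false, iff_false]
        rintro ⟨hy, hy'⟩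
        exact absurd (le_topB hX hy) (by exact not_le.2 hy')
      rw [this]; simp
  | succ n ih =>
      have hstep : X ∩ Set.Ioi (elemSeq X (n+1)) = insert (elemSeq X n) (X ∩ Set.Ioi (elemSeq X n)) := by
        ext y
        simp only [Set.mem_inter_iff, Set.mem_Ioi, Set.mem_insert_iff]
        constructor
        · rintro ⟨hy, hy'⟩
          rcases lt_trichotomy y (elemSeq X n) with h | h | h
          · have := elem_succ_max hX n hy h; omega
          · exact Or.inl h
          · exact Or.inr ⟨hy, h⟩
        · rintro (rfl | ⟨hy, hy'⟩)
          · exact ⟨elem_mem hX n, elem_succ_lt hX n⟩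
          · exact ⟨hy, lt_trans (elem_succ_lt hX n) hy'⟩
      rw [hstep, Set.ncard_insert_of_notMem (by simp) (elem_fin hX _), ih]

end Beta
lemma ncard_Icc_int (a b : ℤ) : (Set.Icc a b).ncard = (b + 1 - a).toNat := by
  rw [← Finset.coe_Icc, Set.ncard_coe_finset, Int.card_Icc]

section Charge

variable {X : Set ℤ} (hX : IsBetaSet X)

include hX

lemma charge_le (n : ℕ) : chargeB X ≤ elemSeq X n + n := by
  set bt := botB X with hbt
  set g := elemSeq X n with hg
  have hfin0 : (X ∩ Set.Ici bt).Finite := by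
    refine Set.Finite.subset (Set.finite_Icc bt (topB X)) ?_
    rintro y ⟨hy, hy'⟩
    exact ⟨hy', le_topB hX hy⟩
  rcases le_or_gt bt g with h | h
  · -- bt ≤ g
    have hsub : X ∩ Set.Ici bt ⊆ (X ∩ Set.Ioi g) ∪ Set.Icc bt g := by
      rintro y ⟨hy, hy'⟩
      rcases le_or_gt y g with h2 | h2
      · exact Or.inr ⟨hy', h2⟩
      · exact Or.inl ⟨hy, h2⟩
    have h1 : (X ∩ Set.Ici bt).ncard ≤ (X ∩ Set.Ioi g).ncard + (Set.Icc bt g).ncard :=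
      le_trans (Set.ncard_le_ncard hsub (Set.Finite.union (elem_fin hX g) (Set.finite_Icc _ _)))
        (Set.ncard_union_le _ _)
    rw [elem_card hX n, ncard_Icc_int] at h1
    have h2 : ((g + 1 - bt).toNat : ℤ) = g + 1 - bt := Int.toNat_of_nonneg (by omega)
    unfold chargeB
    rw [← hbt]
    omega
  · -- g < bt
    have hsub : (X ∩ Set.Ici bt) ∪ Set.Icc (g+1) (bt-1) ⊆ X ∩ Set.Ioi g := by
      rintro y (⟨hy, hy'⟩ | hy)
      · exact ⟨hy, by simp only [Set.mem_Ioi]; exact lt_of_lt_of_le h hy'⟩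
      · simp only [Set.mem_Icc] at hy
        exact ⟨lt_botB_mem hX (by omega), by simp only [Set.mem_Ioi]; omega⟩
    have hdisj : Disjoint (X ∩ Set.Ici bt) (Set.Icc (g+1) (bt-1)) := by
      rw [Set.disjoint_left]
      rintro y ⟨hy, hy'⟩ hy2
      simp only [Set.mem_Ici] at hy'
      simp only [Set.mem_Icc] at hy2
      omega
    have h1 : (X ∩ Set.Ici bt).ncard + (Set.Icc (g+1) (bt-1)).ncard ≤ (X ∩ Set.Ioi g).ncard := by
      rw [← Set.ncard_union_eq hdisj hfin0 (Set.finite_Icc _ _)]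
      exact Set.ncard_le_ncard hsub (elem_fin hX g)
    rw [elem_card hX n, ncard_Icc_int] at h1
    have h2 : ((bt - 1 + 1 - (g+1)).toNat : ℤ) = bt - 1 + 1 - (g + 1) := Int.toNat_of_nonneg (by omega)
    unfold chargeB
    rw [← hbt]
    omega

lemma charge_tail (n : ℕ) (h : elemSeq X n + n = chargeB X) : elemSeq X n - 1 ∈ X := by
  by_contra hmem
  have h1 := charge_le hX (n+1)
  have h2 := elem_succ_lt hX n
  have h3 : elemSeq X (n+1) ≠ elemSeq X n - 1 := fun he => hmem (he ▸ elem_mem hX (n+1))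
  push_cast at h1
  omega

lemma partB_int (n : ℕ) : (partB X n : ℤ) = elemSeq X n + n - chargeB X := by
  unfold partB
  rw [Int.toNat_of_nonneg (by have := charge_le hX n; omega)]
  ring

lemma desc_to_rem {z : ℤ} (hz : z ∈ X) (hz' : z - 1 ∉ X) :
    ∃ a b : ℕ, IsRemovableBox (partB X) a b ∧ (chargeB X : ℤ) + b - a = z - 1 := by
  obtain ⟨n, hn⟩ := elem_surj hX hz
  refine ⟨n + 1, partB X n, ⟨by omega, by simp, ?_, ?_⟩, ?_⟩
  · -- 1 ≤ partB X n
    have h1 := charge_le hX n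
    have h2 : elemSeq X n + n ≠ chargeB X := fun he => hz' (hn ▸ charge_tail hX n he)
    have h3 := partB_int hX n
    omega
  · -- partB X (n+1) < partB X n
    have h1 : elemSeq X (n+1) ≤ z - 2 := by
      have hlt := elem_succ_lt hX n
      have hne : elemSeq X (n+1) ≠ z - 1 := fun he => hz' (he ▸ elem_mem hX (n+1))
      omega
    have h2 := partB_int hX (n+1)
    have h3 := partB_int hX n
    have : (partB X (n+1) : ℤ) < partB X n := by push_cast at h2 h3 ⊢; omega
    exact_mod_cast this
  · have h3 := partB_int hX n
    push_cast
    omega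

lemma rem_to_desc {a b : ℕ} (h : IsRemovableBox (partB X) a b) :
    ∃ z : ℤ, z ∈ X ∧ z - 1 ∉ X ∧ (chargeB X : ℤ) + b - a = z - 1 := by
  obtain ⟨ha, hb, hb1, hlt⟩ := h
  obtain ⟨n, rfl⟩ : ∃ n, a = n + 1 := ⟨a - 1, by omega⟩
  simp only [Nat.add_sub_cancel] at hb
  refine ⟨elemSeq X n, elem_mem hX n, ?_, ?_⟩
  · intro hmem
    have h1 : elemSeq X n - 1 ≤ elemSeq X (n+1) :=
      elem_succ_max hX n hmem (by omega)
    have h2 : elemSeq X (n+1) < elemSeq X n := elem_succ_lt hX n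
    have h3 : elemSeq X (n+1) = elemSeq X n - 1 := by omega
    have h4 := partB_int hX (n+1)
    have h5 := partB_int hX n
    rw [h3] at h4
    have h6 : (partB X (n+1) : ℤ) = partB X n := by push_cast at h4 h5 ⊢; omega
    omega
  · have h5 := partB_int hX n
    subst hb
    push_cast
    omega

lemma gap_to_add {z : ℤ} (hz : z ∉ X) (hz' : z - 1 ∈ X) :
    ∃ a b : ℕ, IsAddableBox (partB X) a b ∧ (chargeB X : ℤ) + b - a = z - 1 := by
  obtain ⟨n, hn⟩ := elem_surj hX hz'
  refine ⟨n + 1, partB X n + 1, ⟨by omega, by simp, ?_⟩, ?_⟩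
  · cases n with
    | zero => exact Or.inl rfl
    | succ k =>
        refine Or.inr ?_
        have hidx : k + 1 + 1 - 2 = k := by omega
        rw [hidx]
        have h1 : elemSeq X k ≥ z + 1 := by
          have hlt : elemSeq X (k+1) < elemSeq X k := elem_succ_lt hX k
          have hmem := elem_mem hX k
          have hne : elemSeq X k ≠ z := fun he => hz (he ▸ hmem)
          omega
        have h2 := partB_int hX (k+1)
        have h3 := partB_int hX k
        have : (partB X (k+1) : ℤ) + 1 ≤ partB X k := by push_cast at h2 h3 ⊢; omega
        omega
  · have h3 := partB_int hX n
    push_cast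
    omega

lemma add_to_gap {a b : ℕ} (h : IsAddableBox (partB X) a b) :
    ∃ z : ℤ, z ∉ X ∧ z - 1 ∈ X ∧ (chargeB X : ℤ) + b - a = z - 1 := by
  obtain ⟨ha, hb, hcond⟩ := h
  obtain ⟨n, rfl⟩ : ∃ n, a = n + 1 := ⟨a - 1, by omega⟩
  simp only [Nat.add_sub_cancel] at hb
  refine ⟨elemSeq X n + 1, ?_, by simpa using elem_mem hX n, ?_⟩
  · intro hmem
    rcases hcond with h1 | h1
    · -- a = 1, n = 0
      have hn0 : n = 0 := by omega
      subst hn0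
      have := le_topB hX hmem
      have : elemSeq X 0 = topB X := rfl
      omega
    · cases n with
      | zero =>
          rw [show (0:ℕ)+1-2 = 0 by omega] at h1
          omega
      | succ k =>
      rw [show k+1+1-2 = k by omega] at h1
      have h2 := partB_int hX (k+1)
      have h3 := partB_int hX k
      have h4 : elemSeq X k ≥ elemSeq X (k+1) + 2 := by
        have : (partB X (k+1) : ℤ) + 1 ≤ partB X k := by exact_mod_cast by omega
        push_cast at h2 h3
        omega
      have h5 : elemSeq X (k+1) + 1 ≤ elemSeq X (k+1) :=
        elem_succ_max hX k hmem (by omega)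
      omega
  · have h3 := partB_int hX n
    subst hb
    push_cast
    omega

lemma no_desc_iff (hnd : ∀ z : ℤ, ¬(z ∈ X ∧ z - 1 ∉ X)) :
    ∀ z : ℤ, z ∈ X ↔ z < botB X := by
  intro z
  constructor
  · intro hz
    by_contra h
    push_neg at h
    have key : ∀ n : ℕ, botB X + n ∉ X := by
      intro n
      induction n with
      | zero => simpa using botB_not_mem hX
      | succ k ih =>
          intro hmem
          have e1 : botB X + ((k+1:ℕ):ℤ) = botB X + (k:ℤ) + 1 := by push_cast; ring
          rw [e1] at hmem
          refine hnd (botB X + (k:ℤ) + 1) ⟨hmem, ?_⟩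
          have e2 : botB X + (k:ℤ) + 1 - 1 = botB X + (k:ℤ) := by ring
          rw [e2]
          exact ih
    have hk := key (z - botB X).toNat
    rw [Int.toNat_of_nonneg (by omega)] at hk
    have e : botB X + (z - botB X) = z := by ring
    rw [e] at hk
    exact hk hz
  · exact lt_botB_mem hX

end Charge
lemma dvd_small {d w : ℤ} (hdvd : d ∣ w) (h1 : -d < w) (h2 : w < d) : w = 0 := by
  have hd : 0 < d := by omega
  exact Int.eq_zero_of_abs_lt_dvd hdvd (abs_lt.2 ⟨h1, h2⟩)

section Win

variable {X : Set ℤ} (hX : IsBetaSet X) {A B : ℤ} (hA : A ≤ botB X) (hB : topB X ≤ B)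

include hX hA hB

lemma desc_bounds {z : ℤ} (hz : z ∈ X) (hz' : z - 1 ∉ X) : A + 1 ≤ z ∧ z ≤ B := by
  constructor
  · by_contra h
    exact hz' (lt_botB_mem hX (by omega))
  · exact le_trans (le_topB hX hz) hB

lemma gap_bounds {z : ℤ} (hz : z ∉ X) (hz' : z - 1 ∈ X) : A ≤ z ∧ z ≤ B + 1 := by
  constructor
  · by_contra h
    exact hz (lt_botB_mem hX (by omega))
  · have := le_topB hX hz'
    omega

end Win

lemma LB (d : ℤ) (hd : 2 ≤ d) (μ₁ μ₂ : ℕ → ℕ) (t₁ t₂ : ℤ) (u v : ℕ)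
    (huv : (u = 1 ∧ v = 2) ∨ (u = 2 ∧ v = 1))
    (Xu Xv : Set ℤ) (hXu : IsBetaSet Xu) (hXv : IsBetaSet Xv)
    (hPu : compPart μ₁ μ₂ u = partB Xu) (hPv : compPart μ₁ μ₂ v = partB Xv)
    (m D M : ℤ)
    (hWu1 : m + 1 ≤ botB Xu) (hWu2 : topB Xu ≤ m + d / 2)
    (hWv1 : m + 1 - D ≤ botB Xv) (hWv2 : topB Xv ≤ m + d / 2 - D)
    (hM : M = D + (compT t₁ t₂ u - chargeB Xu) - (compT t₁ t₂ v - chargeB Xv))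
    (hM0 : 0 ≤ M) (hMd : d ∣ M) :
    (¬ ∃ i : ℤ, ∃ j a b : ℕ, IsGoodRemovableBox d μ₁ μ₂ t₁ t₂ u i j a b) ↔
      ((∀ z : ℤ, ¬(z ∈ Xu ∧ z - 1 ∉ Xu)) ∧
        ∀ γ : ℤ, γ ∈ Xv → γ - 1 ∉ Xv → (γ + D ∉ Xu ∧ γ + D - 1 ∈ Xu)) := by
  have hd2 : 1 ≤ d / 2 := by omega
  have hd2' : d / 2 ≤ d - 1 := by omega
  obtain ⟨su, hsu⟩ : ∃ su : ℤ, su = compT t₁ t₂ u - chargeB Xu := ⟨_, rfl⟩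
  obtain ⟨sv, hsv⟩ : ∃ sv : ℤ, sv = compT t₁ t₂ v - chargeB Xv := ⟨_, rfl⟩
  rw [← hsu, ← hsv] at hM
  constructor
  · -- no good box → Q
    intro hng
    constructor
    · -- Q1: no descent in Xu
      rintro z ⟨hz, hz'⟩
      obtain ⟨a, b, hrem, hcont⟩ := desc_to_rem hXu hz hz'
      have hzb := desc_bounds hXu hWu1 hWu2 hz hz'
      -- the box (u, a, b) is removable with content z - 1 + su; it is not good
      have hCu : chCont (compT t₁ t₂ u) a b = z - 1 + su := by
        unfold chCont; omega
      have hnotgood : ¬ IsGoodRemovableBox d μ₁ μ₂ t₁ t₂ u (z - 1 + su) u a b :=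
        fun hg => hng ⟨_, _, _, _, hg⟩
      rw [IsGoodRemovableBox] at hnotgood
      push_neg at hnotgood
      obtain ⟨j', a', b', hj', hadd, hdvd', hdom⟩ :=
        hnotgood (by omega) (by rw [hPu]; exact hrem) (by rw [hCu]; simp)
      rcases (show j' = u ∨ j' = v by omega) with hje | hje
      · -- addable in row u: gap y with y ≡ z, impossible
        rw [hje] at hadd hdvd' hdom
        rw [hPu] at hadd
        obtain ⟨y, hy, hy', hycont⟩ := add_to_gap hXu hadd
        have hyb := gap_bounds hXu hWu1 hWu2 hy hy'
        have hCy : chCont (compT t₁ t₂ u) a' b' = y - 1 + su := by unfold chCont; omega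
        rw [hCy] at hdvd'
        have : y - z = 0 := dvd_small (by convert hdvd' using 1; ring) (by omega) (by omega)
        exact hy (by rw [show y = z by omega]; exact hz)
      · -- addable in row v
        rw [hje] at hadd hdvd' hdom
        rw [hPv] at hadd
        obtain ⟨y, hy, hy', hycont⟩ := add_to_gap hXv hadd
        have hyb := gap_bounds hXv hWv1 hWv2 hy hy'
        have hCy : chCont (compT t₁ t₂ v) a' b' = y - 1 + sv := by unfold chCont; omega
        rw [hCy] at hdvd'
        rw [hCy, hCu] at hdom
        have hkey : y + D - z = 0 := by
          refine dvd_small (d := d) (w := y + D - z) ?_ (by omega) (by omega)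
          have : y + D - z = (y - 1 + sv - (z - 1 + su)) + M := by rw [hM]; ring
          rw [this]
          exact dvd_add hdvd' hMd
        rcases hdom with hlt | ⟨heq, hjr⟩
        · omega
        · omega
    · -- Q2
      intro γ hγ hγ'
      obtain ⟨a, b, hrem, hcont⟩ := desc_to_rem hXv hγ hγ'
      have hγb := desc_bounds hXv hWv1 hWv2 hγ hγ'
      have hCv : chCont (compT t₁ t₂ v) a b = γ - 1 + sv := by unfold chCont; omega
      have hnotgood : ¬ IsGoodRemovableBox d μ₁ μ₂ t₁ t₂ u (γ - 1 + sv) v a b :=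
        fun hg => hng ⟨_, _, _, _, hg⟩
      rw [IsGoodRemovableBox] at hnotgood
      push_neg at hnotgood
      obtain ⟨j', a', b', hj', hadd, hdvd', hdom⟩ :=
        hnotgood (by omega) (by rw [hPv]; exact hrem) (by rw [hCv]; simp)
      rcases (show j' = u ∨ j' = v by omega) with hje | hje
      · rw [hje] at hadd hdvd' hdom
        rw [hPu] at hadd
        obtain ⟨y, hy, hy', hycont⟩ := add_to_gap hXu hadd
        have hyb := gap_bounds hXu hWu1 hWu2 hy hy'
        have hCy : chCont (compT t₁ t₂ u) a' b' = y - 1 + su := by unfold chCont; omega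
        rw [hCy] at hdvd'
        have hkey : y - (γ + D) = 0 := by
          refine dvd_small (d := d) (w := y - (γ + D)) ?_ (by omega) (by omega)
          have : y - (γ + D) = (y - 1 + su - (γ - 1 + sv)) - M := by rw [hM]; ring
          rw [this]
          exact dvd_sub hdvd' hMd
        have hy2 : y = γ + D := by omega
        rw [hy2] at hy hy'
        exact ⟨hy, hy'⟩
      · rw [hje] at hadd hdvd' hdom
        rw [hPv] at hadd
        obtain ⟨y, hy, hy', hycont⟩ := add_to_gap hXv hadd
        have hyb := gap_bounds hXv hWv1 hWv2 hy hy'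
        have hCy : chCont (compT t₁ t₂ v) a' b' = y - 1 + sv := by unfold chCont; omega
        rw [hCy] at hdvd'
        have : y - γ = 0 := dvd_small (by convert hdvd' using 1; ring) (by omega) (by omega)
        exact absurd ((show γ = y by omega) ▸ hγ) hy
  · -- Q → no good box
    rintro ⟨hQ1, hQ2⟩ ⟨i, j, a, b, hj12, hrem, hdvd', hdom⟩
    rcases (show j = u ∨ j = v by omega) with hje | hje
    · rw [hje, hPu] at hrem
      obtain ⟨z, hz, hz', hcont⟩ := rem_to_desc hXu hrem
      exact hQ1 z ⟨hz, hz'⟩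
    · rw [hje] at hrem hdvd' hdom
      rw [hPv] at hrem
      obtain ⟨γ, hγ, hγ', hcont⟩ := rem_to_desc hXv hrem
      obtain ⟨hg1, hg2⟩ := hQ2 γ hγ hγ'
      obtain ⟨a', b', hadd, hcont'⟩ := gap_to_add hXu hg1 (by simpa using hg2)
      have hCv : chCont (compT t₁ t₂ v) a b = γ - 1 + sv := by unfold chCont; omega
      have hCy : chCont (compT t₁ t₂ u) a' b' = γ + D - 1 + su := by unfold chCont; omega
      have hdiff : chCont (compT t₁ t₂ u) a' b' - chCont (compT t₁ t₂ v) a b = M := by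
        rw [hCy, hCv, hM]; ring
      refine hdom u a' b' (by omega) (by rw [hPu]; exact hadd) ?_ ?_
      · have : chCont (compT t₁ t₂ u) a' b' - i =
            (chCont (compT t₁ t₂ v) a b - i) + M := by omega
        rw [this]
        exact dvd_add hdvd' hMd
      · rcases lt_or_eq_of_le hM0 with h | h
        · exact Or.inl (by omega)
        · exact Or.inr ⟨by omega, rfl⟩
lemma LC (d : ℤ) (hd : 2 ≤ d) (Xr Xl : Set ℤ) (hXr : IsBetaSet Xr) (hXl : IsBetaSet Xl)
    (m D : ℤ)
    (hWr1 : m + 1 ≤ botB Xr) (hWr2 : topB Xr ≤ m + d / 2)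
    (hWl1 : m + 1 - D ≤ botB Xl) (hWl2 : topB Xl ≤ m + d / 2 - D)
    (w : ℤ → UD)
    (hw : ∀ i : ℤ, w i = if m + i ∈ Xr then (if m + i - D ∈ Xl then UD.cross else UD.up)
        else (if m + i - D ∈ Xl then UD.dn else UD.circ)) :
    ((∀ z : ℤ, ¬(z ∈ Xr ∧ z - 1 ∉ Xr)) ∧
      ∀ γ : ℤ, γ ∈ Xl → γ - 1 ∉ Xl → (γ + D ∉ Xr ∧ γ + D - 1 ∈ Xr)) ↔ SortedUD d w := by
  constructor
  · rintro ⟨hQ1, hQ2⟩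
    have hmem := no_desc_iff hXr hQ1
    intro i j h1 hij hj
    rcases eq_or_lt_of_le hij with rfl | hij'
    · exact le_refl _
    have F1 : m + j ∈ Xr → m + i ∈ Xr := by
      intro h
      rw [hmem] at h ⊢
      omega
    have F2 : m + i - D ∉ Xl → m + j - D ∈ Xl → (m + i ∈ Xr ∧ m + j ∉ Xr) := by
      intro hLi hLj
      have hKne : j ∈ {k : ℤ | i + 1 ≤ k ∧ k ≤ j ∧ m + k - D ∈ Xl} := ⟨by omega, le_refl _, hLj⟩
      have hKbdd : BddBelow {k : ℤ | i + 1 ≤ k ∧ k ≤ j ∧ m + k - D ∈ Xl} :=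
        ⟨i + 1, fun k hk => hk.1⟩
      set i' := sInf {k : ℤ | i + 1 ≤ k ∧ k ≤ j ∧ m + k - D ∈ Xl} with hi'def
      have hi' : i' ∈ {k : ℤ | i + 1 ≤ k ∧ k ≤ j ∧ m + k - D ∈ Xl} :=
        Int.csInf_mem ⟨j, hKne⟩ hKbdd
      obtain ⟨hi1, hi2, hi3⟩ := hi'
      have hprev : m + i' - D - 1 ∉ Xl := by
        rcases eq_or_lt_of_le hi1 with he | hlt
        · rw [show m + i' - D - 1 = m + i - D by omega]
          exact hLi
        · intro hc
          have : i' ≤ i' - 1 := csInf_le hKbdd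
            ⟨by omega, by omega, by rw [show m + (i'-1) - D = m + i' - D - 1 by ring]; exact hc⟩
          omega
      obtain ⟨hg1, hg2⟩ := hQ2 (m + i' - D) hi3 hprev
      rw [show m + i' - D + D = m + i' by ring] at hg1
      rw [show m + i' - D + D - 1 = m + i' - 1 by ring] at hg2
      have hg2' : m + i' - 1 < botB Xr := (hmem _).1 hg2
      have hg1' : ¬ (m + i' < botB Xr) := fun h => hg1 ((hmem _).2 h)
      refine ⟨(hmem _).2 (by omega), fun h => ?_⟩
      have := (hmem _).1 h
      omega
    rw [hw i, hw j]
    by_cases hRj : m + j ∈ Xr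
    · have hRi := F1 hRj
      by_cases hLj : m + j - D ∈ Xl
      · have hLi : m + i - D ∈ Xl := by
          by_contra hLi
          exact (F2 hLi hLj).2 hRj
        simp [hRi, hRj, hLi, hLj, udIdx]
      · by_cases hLi : m + i - D ∈ Xl <;> simp [hRi, hRj, hLi, hLj, udIdx]
    · by_cases hRi : m + i ∈ Xr
      · by_cases hLi : m + i - D ∈ Xl <;> by_cases hLj : m + j - D ∈ Xl <;>
          simp [hRi, hRj, hLi, hLj, udIdx]
      · by_cases hLi : m + i - D ∈ Xl
        · by_cases hLj : m + j - D ∈ Xl <;> simp [hRi, hRj, hLi, hLj, udIdx]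
        · have hLj : m + j - D ∉ Xl := fun hLj => hRi (F2 hLi hLj).1
          simp [hRi, hRj, hLi, hLj, udIdx]
  · intro hs
    constructor
    · rintro z ⟨hz, hz'⟩
      obtain ⟨hb1, hb2⟩ := desc_bounds hXr hWr1 hWr2 hz hz'
      have hs1 := hs (z - m - 1) (z - m) (by omega) (by omega) (by omega)
      rw [hw, hw, show m + (z - m - 1) = z - 1 by ring, show m + (z - m) = z by ring] at hs1
      by_cases hL1 : z - 1 - D ∈ Xl <;> by_cases hL2 : z - D ∈ Xl <;>
        simp [hz, hz', hL1, hL2, udIdx] at hs1 <;> omega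
    · intro γ hγ hγ'
      obtain ⟨hb1, hb2⟩ := desc_bounds hXl hWl1 hWl2 hγ hγ'
      have hs1 := hs (γ + D - m - 1) (γ + D - m) (by omega) (by omega) (by omega)
      rw [hw, hw, show m + (γ + D - m - 1) = γ + D - 1 by ring,
        show m + (γ + D - m) = γ + D by ring,
        show γ + D - 1 - D = γ - 1 by ring, show γ + D - D = γ by ring] at hs1
      by_cases hR1 : γ + D - 1 ∈ Xr <;> by_cases hR2 : γ + D ∈ Xr
      · exfalso; simp [hγ, hγ', hR1, hR2, udIdx] at hs1 <;> omega
      · exact ⟨hR2, hR1⟩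
      · exfalso; simp [hγ, hγ', hR1, hR2, udIdx] at hs1 <;> omega
      · exfalso; simp [hγ, hγ', hR1, hR2, udIdx] at hs1 <;> omega
/-- A `d`-small symbol `Θ` (bipartition `λ¹.λ²`, charge `(σ₁,σ₂)`,
charged contents taken w.r.t. `t = (σ₁, σ₂ + d/2)`, right region in row `r`) has no
good removable `i`-box for any residue `i` modulo `d` if and only if its up-down
diagram reads `×^α ∧^w ∨^h ∘^β`. -/
theorem stmt2 (d : ℤ) (hd : 2 ≤ d) (hdE : Even d)
    (X₁ X₂ : Set ℤ) (hX₁ : IsBetaSet X₁) (hX₂ : IsBetaSet X₂)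
    (a₁ b₁ a₂ b₂ : ℤ) (hsm : IsDSmallWith d X₁ X₂ a₁ b₁ a₂ b₂) :
    (¬ ∃ (i : ℤ) (j a b : ℕ),
        IsGoodRemovableBox d (partB X₁) (partB X₂) (chargeB X₁) (chargeB X₂ + d / 2)
          (rightRow b₁ b₂) i j a b) ↔
    SortedUD d (wud d X₁ X₂ b₁ b₂) := by
  obtain ⟨hlen₁, hlen₂, hbot₁, hbot₂, htop₁, htop₂, hcong⟩ := hsm
  obtain ⟨kk, hkk⟩ := hdE
  have hd2 : d / 2 + d / 2 = d := by omega
  have hd2' : 1 ≤ d / 2 := by omega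
  have hne : b₁ ≠ b₂ := by
    intro h
    subst h
    have h1 : d ∣ d / 2 := (dvd_neg).1 (show d ∣ -(d / 2) by convert hcong using 1; omega)
    have := Int.le_of_dvd (by omega) h1
    omega
  rcases lt_or_gt_of_ne hne with hlt | hlt
  · -- b₁ < b₂ : right region in row 2
    have hrr : rightRow b₁ b₂ = 2 := if_pos hlt
    rw [hrr]
    have hMd : d ∣ (b₂ - b₁) + d / 2 := by
      have he : (b₂ - b₁) + d / 2 = (b₂ - (b₁ + d / 2)) + d := by omega
      rw [he]
      exact dvd_add hcong (dvd_refl d)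
    have hLB := LB d hd (partB X₁) (partB X₂) (chargeB X₁) (chargeB X₂ + d / 2) 2 1
      (Or.inr ⟨rfl, rfl⟩) X₂ X₁ hX₂ hX₁ (by simp [compPart]) (by simp [compPart])
      (b₂ - d / 2) (b₂ - b₁) ((b₂ - b₁) + d / 2)
      (by omega) (by omega) (by omega) (by omega)
      (by simp [compT]; try ring) (by omega) hMd
    have hw : ∀ i : ℤ, wud d X₁ X₂ b₁ b₂ i =
        if (b₂ - d / 2) + i ∈ X₂ then
          (if (b₂ - d / 2) + i - (b₂ - b₁) ∈ X₁ then UD.cross else UD.up)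
        else (if (b₂ - d / 2) + i - (b₂ - b₁) ∈ X₁ then UD.dn else UD.circ) := by
      intro i
      simp only [wud, rightSet, leftSet, if_pos hlt, max_eq_right (le_of_lt hlt),
        abs_of_nonneg (by omega : (0:ℤ) ≤ b₂ - b₁)]
    have hLC := LC d hd X₂ X₁ hX₂ hX₁ (b₂ - d / 2) (b₂ - b₁)
      (by omega) (by omega) (by omega) (by omega) (wud d X₁ X₂ b₁ b₂) hw
    exact hLB.trans hLC
  · -- b₂ < b₁ : right region in row 1
    have hrr : rightRow b₁ b₂ = 1 := if_neg (by omega)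
    rw [hrr]
    have hdm : d ∣ (b₁ - b₂) + d / 2 := (dvd_neg).1 (show d ∣ -((b₁ - b₂) + d / 2) by convert hcong using 1; omega)
    have hMd : d ∣ (b₁ - b₂) - d / 2 := by
      have he : (b₁ - b₂) - d / 2 = ((b₁ - b₂) + d / 2) - d := by omega
      rw [he]
      exact dvd_sub hdm (dvd_refl d)
    have hM0 : 0 ≤ (b₁ - b₂) - d / 2 := by
      have := Int.le_of_dvd (by omega) hdm
      omega
    have hLB := LB d hd (partB X₁) (partB X₂) (chargeB X₁) (chargeB X₂ + d / 2) 1 2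
      (Or.inl ⟨rfl, rfl⟩) X₁ X₂ hX₁ hX₂ (by simp [compPart]) (by simp [compPart])
      (b₁ - d / 2) (b₁ - b₂) ((b₁ - b₂) - d / 2)
      (by omega) (by omega) (by omega) (by omega)
      (by simp [compT]; try ring) hM0 hMd
    have hw : ∀ i : ℤ, wud d X₁ X₂ b₁ b₂ i =
        if (b₁ - d / 2) + i ∈ X₁ then
          (if (b₁ - d / 2) + i - (b₁ - b₂) ∈ X₂ then UD.cross else UD.up)
        else (if (b₁ - d / 2) + i - (b₁ - b₂) ∈ X₂ then UD.dn else UD.circ) := by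
      intro i
      simp only [wud, rightSet, leftSet, if_neg (show ¬ b₁ < b₂ by omega),
        max_eq_left (show b₂ ≤ b₁ by omega), abs_of_nonpos (show b₂ - b₁ ≤ 0 by omega), neg_sub]
    have hLC := LC d hd X₁ X₂ hX₁ hX₂ (b₁ - d / 2) (b₁ - b₂)
      (by omega) (by omega) (by omega) (by omega) (wud d X₁ X₂ b₁ b₂) hw
    exact hLB.trans hLC
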